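/- arXiv:1904.09711 — 5 statements merged into one kernel-verified Lean document; each statement's English description precedes it below -/
import Mathlib

section
/- For a standard Gaussian random vector (a₁, a₂) in ℝ² and any angle θ ∈ [0, π], the expectation E|a₁(a₁ cos θ + a₂ sin θ)| equals (2/π)(sin θ + (π/2 − θ) cos θ). -/
open MeasureTheory Real ProbabilityTheory Set intervalIntegral Filter

lemma abs_integral_K {θ : ℝ} (hθ : θ ∈ Set.Icc 0 π) :
    ∫ u in (-π)..π, |Real.cos θ + Real.cos u| =
      4 * Real.sin θ + (2 * π - 4 * θ) * Real.cos θ := by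
  obtain ⟨h0, hπ⟩ := hθ
  have hle1 : -π ≤ -(π - θ) := by linarith
  have hle2 : -(π - θ) ≤ π - θ := by linarith
  have hle3 : π - θ ≤ π := by linarith
  have hcont : Continuous fun u : ℝ => |Real.cos θ + Real.cos u| :=
    (continuous_const.add Real.continuous_cos).abs
  have hint : ∀ a b : ℝ, IntervalIntegrable (fun u => |Real.cos θ + Real.cos u|) volume a b :=
    fun a b => hcont.intervalIntegrable a b
  have split1 : ∫ u in (-π)..π, |Real.cos θ + Real.cos u| =
      (∫ u in (-π)..(-(π - θ)), |Real.cos θ + Real.cos u|) +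
      (∫ u in (-(π - θ))..(π - θ), |Real.cos θ + Real.cos u|) +
      (∫ u in (π - θ)..π, |Real.cos θ + Real.cos u|) := by
    rw [integral_add_adjacent_intervals (hint _ _) (hint _ _),
      integral_add_adjacent_intervals (hint _ _) (hint _ _)]
  have key : ∀ u : ℝ, π - θ ≤ u → u ≤ π → Real.cos θ + Real.cos u ≤ 0 := by
    intro u h1 h2
    have := Real.cos_le_cos_of_nonneg_of_le_pi (by linarith) h2 h1
    rw [Real.cos_pi_sub] at this
    linarith
  have hL : (∫ u in (-π)..(-(π - θ)), |Real.cos θ + Real.cos u|) =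
      ∫ u in (-π)..(-(π - θ)), -(Real.cos θ + Real.cos u) := by
    apply integral_congr
    intro u hu
    rw [uIcc_of_le (by linarith)] at hu
    have : Real.cos θ + Real.cos u ≤ 0 := by
      have := key (-u) (by simpa using neg_le_neg hu.2) (by linarith [hu.1])
      rwa [Real.cos_neg] at this
    exact abs_of_nonpos this
  have hM : (∫ u in (-(π - θ))..(π - θ), |Real.cos θ + Real.cos u|) =
      ∫ u in (-(π - θ))..(π - θ), (Real.cos θ + Real.cos u) := by
    apply integral_congr
    intro u hu
    rw [uIcc_of_le hle2] at hu
    have habs : |u| ≤ π - θ := abs_le.2 ⟨hu.1, hu.2⟩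
    have := Real.cos_le_cos_of_nonneg_of_le_pi (abs_nonneg u) (by linarith) habs
    rw [Real.cos_abs, Real.cos_pi_sub] at this
    exact abs_of_nonneg (by linarith)
  have hR : (∫ u in (π - θ)..π, |Real.cos θ + Real.cos u|) =
      ∫ u in (π - θ)..π, -(Real.cos θ + Real.cos u) := by
    apply integral_congr
    intro u hu
    rw [uIcc_of_le hle3] at hu
    exact abs_of_nonpos (key u hu.1 hu.2)
  rw [split1, hL, hM, hR]
  have hic : ∀ a b : ℝ, IntervalIntegrable (fun u : ℝ => Real.cos θ) volume a b :=
    fun a b => intervalIntegrable_const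
  have hcc : ∀ a b : ℝ, IntervalIntegrable Real.cos volume a b :=
    fun a b => Real.continuous_cos.intervalIntegrable a b
  simp only [intervalIntegral.integral_neg, intervalIntegral.integral_add (hic _ _) (hcc _ _),
    integral_cos, intervalIntegral.integral_const, smul_eq_mul]
  rw [Real.sin_pi, Real.sin_neg, Real.sin_neg, Real.sin_pi, Real.sin_pi_sub]
  ring

lemma radial_integral : ∫ r in Ioi (0:ℝ), r ^ 3 * Real.exp (-r ^ 2 / 2) = 2 := by
  have hderiv : ∀ r ∈ Ici (0:ℝ),
      HasDerivAt (fun r : ℝ => (-r ^ 2 - 2) * Real.exp (-r ^ 2 / 2))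
        (r ^ 3 * Real.exp (-r ^ 2 / 2)) r := by
    intro r _
    have h1 : HasDerivAt (fun r : ℝ => -r ^ 2 / 2) (-r) r := by
      have := ((hasDerivAt_pow 2 r).neg.div_const 2)
      exact this.congr_deriv (by push_cast; ring)
    have h2 := h1.exp
    have h3 : HasDerivAt (fun r : ℝ => -r ^ 2 - 2) (-(2 * r)) r := by
      simpa using ((hasDerivAt_pow 2 r).neg.sub_const 2)
    have := h3.mul h2
    exact this.congr_deriv (by ring)
  have hint : IntegrableOn (fun r : ℝ => r ^ 3 * Real.exp (-r ^ 2 / 2)) (Ioi 0) := by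
    have h := integrableOn_rpow_mul_exp_neg_mul_sq (show (0:ℝ) < 1/2 by norm_num)
      (show (-1:ℝ) < 3 by norm_num)
    apply h.congr_fun ?_ measurableSet_Ioi
    intro x hx
    simp only []
    rw [show ((3:ℝ)) = ((3:ℕ):ℝ) by norm_num, Real.rpow_natCast]
    ring_nf
  have htend : Tendsto (fun r : ℝ => (-r ^ 2 - 2) * Real.exp (-r ^ 2 / 2)) atTop (nhds 0) := by
    have hb : Tendsto (fun r : ℝ => (r ^ 2 + 2) * Real.exp (-r)) atTop (nhds 0) := by
      have h1 := tendsto_pow_mul_exp_neg_atTop_nhds_zero 2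
      have h2 := (tendsto_exp_neg_atTop_nhds_zero.const_mul (2:ℝ))
      have := h1.add h2
      simpa [add_mul] using this
    have : Tendsto (fun r : ℝ => (r ^ 2 + 2) * Real.exp (-r ^ 2 / 2)) atTop (nhds 0) := by
      apply squeeze_zero' (g := fun r : ℝ => (r ^ 2 + 2) * Real.exp (-r))
      · filter_upwards [eventually_ge_atTop (0:ℝ)] with r hr
        positivity
      · filter_upwards [eventually_ge_atTop (2:ℝ)] with r hr
        have : -r ^ 2 / 2 ≤ -r := by nlinarith
        have := Real.exp_le_exp.2 this
        nlinarith [Real.exp_pos (-r ^ 2 / 2), Real.exp_pos (-r), sq_nonneg r]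
      · exact hb
    have := this.neg
    simp only [neg_zero] at this
    convert this using 2 with r
    ring
  have := integral_Ioi_of_hasDerivAt_of_tendsto' hderiv hint htend
  rw [this]
  norm_num

lemma angular_integral {θ : ℝ} (hθ : θ ∈ Set.Icc 0 π) :
    ∫ ψ in Ioo (-π) π, |Real.cos ψ * Real.cos (ψ - θ)| =
      2 * Real.sin θ + (π - 2 * θ) * Real.cos θ := by
  have hπ := Real.pi_pos
  have hset : ∫ ψ in Ioo (-π) π, |Real.cos ψ * Real.cos (ψ - θ)| =
      ∫ ψ in (-π)..π, |Real.cos ψ * Real.cos (ψ - θ)| := by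
    rw [intervalIntegral.integral_of_le (by linarith), integral_Ioc_eq_integral_Ioo]
  rw [hset]
  have hpt : ∀ ψ : ℝ, |Real.cos ψ * Real.cos (ψ - θ)| =
      (1 / 2) * |Real.cos θ + Real.cos (2 * ψ - θ)| := by
    intro ψ
    have key : Real.cos θ + Real.cos (2 * ψ - θ) = 2 * (Real.cos ψ * Real.cos (ψ - θ)) := by
      rw [Real.cos_sub, Real.cos_sub, Real.cos_two_mul, Real.sin_two_mul]
      ring
    rw [key, abs_mul 2 (Real.cos ψ * Real.cos (ψ - θ)), abs_two]
    ring
  simp_rw [hpt]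
  rw [intervalIntegral.integral_const_mul]
  have hcomp := intervalIntegral.integral_comp_mul_sub
    (fun u : ℝ => |Real.cos θ + Real.cos u|) (two_ne_zero) θ (a := -π) (b := π)
  rw [hcomp]
  have hper : Function.Periodic (fun u : ℝ => |Real.cos θ + Real.cos u|) (2 * π) := by
    intro x
    simp [Real.cos_add_two_pi]
  have hcont : Continuous fun u : ℝ => |Real.cos θ + Real.cos u| :=
    (continuous_const.add Real.continuous_cos).abs
  have hsplit : ∫ u in (2 * -π - θ)..(2 * π - θ), |Real.cos θ + Real.cos u| =
      (∫ u in (2 * -π - θ)..(-θ), |Real.cos θ + Real.cos u|) +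
      (∫ u in (-θ)..(2 * π - θ), |Real.cos θ + Real.cos u|) := by
    rw [integral_add_adjacent_intervals (hcont.intervalIntegrable _ _)
      (hcont.intervalIntegrable _ _)]
  have hp1 : ∫ u in (2 * -π - θ)..(-θ), |Real.cos θ + Real.cos u| =
      ∫ u in (-π)..π, |Real.cos θ + Real.cos u| := by
    have := hper.intervalIntegral_add_eq (2 * -π - θ) (-π)
    rw [show 2 * -π - θ + 2 * π = -θ by ring, show -π + 2 * π = π by ring] at this
    exact this
  have hp2 : ∫ u in (-θ)..(2 * π - θ), |Real.cos θ + Real.cos u| =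
      ∫ u in (-π)..π, |Real.cos θ + Real.cos u| := by
    have := hper.intervalIntegral_add_eq (-θ) (-π)
    rw [show -θ + 2 * π = 2 * π - θ by ring, show -π + 2 * π = π by ring] at this
    exact this
  rw [hsplit, hp1, hp2, abs_integral_K hθ]
  simp only [smul_eq_mul]
  ring

lemma gaussian_prod_eq :
    (gaussianReal 0 1).prod (gaussianReal 0 1) =
      (volume : Measure (ℝ × ℝ)).withDensity
        (fun p => ENNReal.ofReal (gaussianPDFReal 0 1 p.1 * gaussianPDFReal 0 1 p.2)) := by
  have hv : (1 : NNReal) ≠ 0 := one_ne_zero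
  have hm : Measurable fun p : ℝ × ℝ =>
      ENNReal.ofReal (gaussianPDFReal 0 1 p.1 * gaussianPDFReal 0 1 p.2) :=
    (((measurable_gaussianPDFReal 0 1).comp measurable_fst).mul
      ((measurable_gaussianPDFReal 0 1).comp measurable_snd)).ennreal_ofReal
  refine Measure.prod_eq fun s t hs ht => ?_
  rw [withDensity_apply _ (hs.prod ht), Measure.volume_eq_prod,
    ← Measure.prod_restrict]
  have : ∫⁻ p : ℝ × ℝ, ENNReal.ofReal (gaussianPDFReal 0 1 p.1 * gaussianPDFReal 0 1 p.2)
        ∂((volume.restrict s).prod (volume.restrict t)) =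
      ∫⁻ x, ∫⁻ y, ENNReal.ofReal (gaussianPDFReal 0 1 x * gaussianPDFReal 0 1 y)
        ∂(volume.restrict t) ∂(volume.restrict s) :=
    MeasureTheory.lintegral_prod _ hm.aemeasurable
  rw [this]
  have hpt : ∀ x y : ℝ, ENNReal.ofReal (gaussianPDFReal 0 1 x * gaussianPDFReal 0 1 y) =
      ENNReal.ofReal (gaussianPDFReal 0 1 x) * ENNReal.ofReal (gaussianPDFReal 0 1 y) :=
    fun x y => ENNReal.ofReal_mul (gaussianPDFReal_nonneg 0 1 x)
  simp_rw [hpt]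
  rw [gaussianReal_apply 0 hv s, gaussianReal_apply 0 hv t]
  simp_rw [lintegral_const_mul'' _
      ((measurable_gaussianPDFReal 0 1).ennreal_ofReal.aemeasurable.restrict),
    lintegral_mul_const'' _ ((measurable_gaussianPDFReal 0 1).ennreal_ofReal.aemeasurable.restrict)]
  rfl

/-- For a standard Gaussian random vector `(a₁, a₂)` in `ℝ²` and any angle `θ ∈ [0, π]`,
`E |a₁ (a₁ cos θ + a₂ sin θ)| = (2/π) (sin θ + (π/2 − θ) cos θ)`. -/
theorem expectation_abs_gaussian_product (θ : ℝ) (hθ : θ ∈ Set.Icc 0 π) :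
    ∫ a : ℝ × ℝ, |a.1 * (a.1 * Real.cos θ + a.2 * Real.sin θ)|
        ∂((gaussianReal 0 1).prod (gaussianReal 0 1)) =
      (2 / π) * (Real.sin θ + (π / 2 - θ) * Real.cos θ) := by
  have hπ := Real.pi_pos
  set φg := gaussianPDFReal 0 1 with hφg
  set F : ℝ × ℝ → ℝ := fun a => |a.1 * (a.1 * Real.cos θ + a.2 * Real.sin θ)| with hF
  have hn : Measurable fun p : ℝ × ℝ => Real.toNNReal (φg p.1 * φg p.2) :=
    (((measurable_gaussianPDFReal 0 1).comp measurable_fst).mul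
      ((measurable_gaussianPDFReal 0 1).comp measurable_snd)).real_toNNReal
  have step1 : ∫ a, F a ∂((gaussianReal 0 1).prod (gaussianReal 0 1)) =
      ∫ p : ℝ × ℝ, (φg p.1 * φg p.2) * F p := by
    rw [gaussian_prod_eq]
    have : (fun p : ℝ × ℝ => ENNReal.ofReal (φg p.1 * φg p.2)) =
        fun p : ℝ × ℝ => ((Real.toNNReal (φg p.1 * φg p.2) : NNReal) : ENNReal) := rfl
    rw [this, integral_withDensity_eq_integral_smul hn]
    congr 1
    ext p
    rw [NNReal.smul_def, Real.coe_toNNReal _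
      (mul_nonneg (gaussianPDFReal_nonneg 0 1 p.1) (gaussianPDFReal_nonneg 0 1 p.2))]
    rw [smul_eq_mul]
  rw [step1]
  -- polar coordinates
  rw [← integral_comp_polarCoord_symm (fun p : ℝ × ℝ => (φg p.1 * φg p.2) * F p)]
  have htarget : polarCoord.target = Ioi (0:ℝ) ×ˢ Ioo (-π) π := rfl
  have hφval : ∀ x : ℝ, φg x = (Real.sqrt (2 * π))⁻¹ * Real.exp (-x ^ 2 / 2) := by
    intro x
    simp [hφg, gaussianPDFReal]
  have step2 : ∫ p in polarCoord.target,
        p.1 • ((φg (polarCoord.symm p).1 * φg (polarCoord.symm p).2) * F (polarCoord.symm p)) =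
      ∫ p in Ioi (0:ℝ) ×ˢ Ioo (-π) π,
        (p.1 ^ 3 * Real.exp (-p.1 ^ 2 / 2)) *
          ((2 * π)⁻¹ * |Real.cos p.2 * Real.cos (p.2 - θ)|) := by
    rw [htarget]
    apply setIntegral_congr_fun (measurableSet_Ioi.prod measurableSet_Ioo)
    rintro ⟨r, ψ⟩ ⟨hr, hψ⟩
    have hr0 : (0:ℝ) < r := hr
    have hsymm : polarCoord.symm (r, ψ) = (r * Real.cos ψ, r * Real.sin ψ) := rfl
    simp only [hsymm, hF, hφval, smul_eq_mul]
    have hexp : Real.exp (-(r * Real.cos ψ) ^ 2 / 2) * Real.exp (-(r * Real.sin ψ) ^ 2 / 2) =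
        Real.exp (-r ^ 2 / 2) := by
      rw [← Real.exp_add]
      congr 1
      have := Real.sin_sq_add_cos_sq ψ
      nlinarith [this]
    have habs : |r * Real.cos ψ * (r * Real.cos ψ * Real.cos θ + r * Real.sin ψ * Real.sin θ)| =
        r ^ 2 * |Real.cos ψ * Real.cos (ψ - θ)| := by
      rw [Real.cos_sub]
      rw [show r * Real.cos ψ * (r * Real.cos ψ * Real.cos θ + r * Real.sin ψ * Real.sin θ) =
        r ^ 2 * (Real.cos ψ * (Real.cos ψ * Real.cos θ + Real.sin ψ * Real.sin θ)) by ring]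
      rw [abs_mul, abs_of_nonneg (sq_nonneg r)]
    have hsq : (Real.sqrt (2 * π))⁻¹ * (Real.sqrt (2 * π))⁻¹ = (2 * π)⁻¹ := by
      rw [← mul_inv, Real.mul_self_sqrt (by positivity)]
    calc r * ((Real.sqrt (2 * π))⁻¹ * Real.exp (-(r * Real.cos ψ) ^ 2 / 2) *
          ((Real.sqrt (2 * π))⁻¹ * Real.exp (-(r * Real.sin ψ) ^ 2 / 2)) *
          |r * Real.cos ψ * (r * Real.cos ψ * Real.cos θ + r * Real.sin ψ * Real.sin θ)|)
        = ((Real.sqrt (2 * π))⁻¹ * (Real.sqrt (2 * π))⁻¹) *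
            (Real.exp (-(r * Real.cos ψ) ^ 2 / 2) * Real.exp (-(r * Real.sin ψ) ^ 2 / 2)) *
            (r * |r * Real.cos ψ * (r * Real.cos ψ * Real.cos θ + r * Real.sin ψ * Real.sin θ)|)
          := by ring
      _ = (2 * π)⁻¹ * Real.exp (-r ^ 2 / 2) * (r * (r ^ 2 * |Real.cos ψ * Real.cos (ψ - θ)|)) := by
          rw [hexp, habs, hsq]
      _ = (r ^ 3 * Real.exp (-r ^ 2 / 2)) * ((2 * π)⁻¹ * |Real.cos ψ * Real.cos (ψ - θ)|) := by
          ring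
  rw [step2, Measure.volume_eq_prod,
    setIntegral_prod_mul (fun a : ℝ => a ^ 3 * Real.exp (-a ^ 2 / 2))
      (fun b : ℝ => (2 * π)⁻¹ * |Real.cos b * Real.cos (b - θ)|), radial_integral]
  rw [MeasureTheory.integral_const_mul, angular_integral hθ]
  field_simp
end

section
/- The function f(θ) = (2/π)(sin θ + (π/2 − θ) cos θ) − |cos θ| is monotonically increasing on [0, π/2], with f(0) = 0. -/
open Real

lemma g_hasDerivAt (θ : ℝ) :
    HasDerivAt (fun θ : ℝ => (2 / π) * (Real.sin θ + (π / 2 - θ) * Real.cos θ) - Real.cos θ)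
      (2 / π * θ * Real.sin θ) θ := by
  have h1 : HasDerivAt (fun θ : ℝ => (π / 2 - θ) * Real.cos θ)
      ((-1) * Real.cos θ + (π / 2 - θ) * (-Real.sin θ)) θ := by
    simpa [Pi.sub_def, Pi.mul_def] using ((hasDerivAt_const θ (π / 2)).sub (hasDerivAt_id θ)).mul (Real.hasDerivAt_cos θ)
  have h2 := (((Real.hasDerivAt_sin θ).add h1).const_mul (2 / π)).sub (Real.hasDerivAt_cos θ)
  refine h2.congr_deriv ?_
  have hπ : (π : ℝ) ≠ 0 := Real.pi_ne_zero
  have hk : 2 / π * (π / 2) = 1 := by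
    rw [div_mul_div_comm, mul_comm 2 π]; exact div_self (by positivity)
  linear_combination (-Real.sin θ) * hk

lemma g_mono : MonotoneOn
    (fun θ : ℝ => (2 / π) * (Real.sin θ + (π / 2 - θ) * Real.cos θ) - Real.cos θ)
    (Set.Icc 0 (π / 2)) := by
  apply monotoneOn_of_deriv_nonneg (convex_Icc _ _)
  · exact (Continuous.continuousOn (by continuity))
  · intro x hx
    exact (g_hasDerivAt x).differentiableAt.differentiableWithinAt
  · intro x hx
    rw [interior_Icc] at hx
    rw [(g_hasDerivAt x).deriv]
    have hx0 : 0 < x := hx.1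
    have hx2 : x < π / 2 := hx.2
    have hs : 0 ≤ Real.sin x := Real.sin_nonneg_of_nonneg_of_le_pi hx0.le
      (hx2.le.trans (by linarith [Real.pi_pos]))
    positivity

/-- `f(θ) = (2/π)(sin θ + (π/2 − θ) cos θ) − |cos θ|` is monotonically increasing on
`[0, π/2]` and `f(0) = 0`. -/
theorem f_monotone_on_and_zero :
    MonotoneOn (fun θ : ℝ => (2 / π) * (Real.sin θ + (π / 2 - θ) * Real.cos θ) - |Real.cos θ|)
      (Set.Icc 0 (π / 2)) ∧
    (2 / π) * (Real.sin 0 + (π / 2 - 0) * Real.cos 0) - |Real.cos 0| = 0 := by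
  constructor
  · intro a ha b hb hab
    have hea : |Real.cos a| = Real.cos a :=
      abs_of_nonneg (Real.cos_nonneg_of_mem_Icc ⟨by linarith [ha.1, Real.pi_pos], ha.2⟩)
    have heb : |Real.cos b| = Real.cos b :=
      abs_of_nonneg (Real.cos_nonneg_of_mem_Icc ⟨by linarith [hb.1, Real.pi_pos], hb.2⟩)
    simp only [hea, heb]
    exact g_mono ha hb hab
  · simp
end

section
/- For independent standard Gaussians a₁, a₂ and θ ∈ [0, π/2], define ξ = a₁(a₁ cos θ + a₂ sin θ). Then E(|ξ| − ξ) = (2/π)(sin θ + (π/2 − θ) cos θ) − cos θ = f(θ) ≥ 0, with equality if and only if θ = 0. -/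
open MeasureTheory Real ProbabilityTheory

section Aux

open Set Filter intervalIntegral NNReal ENNReal

private lemma radial_int' : ∫ r in Set.Ioi (0:ℝ), r^3 * Real.exp (-(r^2/2)) = 2 := by
  have hd : ∀ r ∈ Set.Ici (0:ℝ), HasDerivAt (fun r : ℝ => -(r^2+2) * Real.exp (-(r^2/2)))
      (r^3 * Real.exp (-(r^2/2))) r := by
    intro r _
    have h1 : HasDerivAt (fun r : ℝ => -(r^2/2)) (-r) r := by
      have := (hasDerivAt_pow 2 r).div_const 2
      simpa using this.fun_neg
    have h2 : HasDerivAt (fun r : ℝ => Real.exp (-(r^2/2))) (Real.exp (-(r^2/2)) * (-r)) r :=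
      (Real.hasDerivAt_exp _).comp r h1
    have h3 : HasDerivAt (fun r : ℝ => -(r^2+2)) (-(2*r)) r := by
      simpa using ((hasDerivAt_pow 2 r).add_const 2).fun_neg
    have := h3.fun_mul h2
    refine this.congr_deriv ?_
    ring
  have hint : IntegrableOn (fun r : ℝ => r^3 * Real.exp (-(r^2/2))) (Set.Ioi 0) := by
    have := integrableOn_rpow_mul_exp_neg_mul_sq (b := 1/2) (by norm_num) (s := 3) (by norm_num)
    refine this.congr_fun ?_ measurableSet_Ioi
    intro x hx
    have h3 : x ^ (3:ℝ) = x ^ (3:ℕ) := by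
      rw [show (3:ℝ) = ((3:ℕ):ℝ) by push_cast; ring, Real.rpow_natCast]
    simp only [h3]
    ring_nf
  have htend : Filter.Tendsto (fun r : ℝ => -(r^2+2) * Real.exp (-(r^2/2)))
      Filter.atTop (nhds 0) := by
    have hu : Tendsto (fun r : ℝ => r^2/2) atTop atTop :=
      (tendsto_pow_atTop two_ne_zero).atTop_div_const (by norm_num)
    have hg : Tendsto (fun u : ℝ => -(2*u+2) * Real.exp (-u)) atTop (nhds 0) := by
      have h1 := tendsto_pow_mul_exp_neg_atTop_nhds_zero 1
      have h2 := Real.tendsto_exp_neg_atTop_nhds_zero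
      have h3 := (h1.const_mul (-2)).add (h2.const_mul (-2))
      simp only [pow_one, mul_zero, add_zero] at h3
      convert h3 using 2 with u
      ring
    have := hg.comp hu
    convert this using 2 with r
    simp [Function.comp]
    ring
  have := integral_Ioi_of_hasDerivAt_of_tendsto' hd hint htend
  rw [this]
  norm_num

private lemma Hderiv' (θ x : ℝ) :
    HasDerivAt (fun φ : ℝ => Real.sin (2*φ - θ)/4 + φ * Real.cos θ/2)
    (Real.cos x * Real.cos (x - θ)) x := by
  have h1 : HasDerivAt (fun φ : ℝ => 2*φ - θ) 2 x := by
    simpa using ((hasDerivAt_id x).const_mul 2).sub_const θ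
  have h2 : HasDerivAt (fun φ : ℝ => Real.sin (2*φ - θ)) (Real.cos (2*x - θ) * 2) x :=
    (Real.hasDerivAt_sin _).comp x h1
  have h3 := (h2.div_const 4).fun_add (((hasDerivAt_id x).mul_const (Real.cos θ)).div_const 2)
  refine h3.congr_deriv ?_
  rw [Real.cos_sub, Real.cos_sub, Real.cos_two_mul, Real.sin_two_mul]
  ring

private lemma integral_h' (θ a b : ℝ) : ∫ φ in a..b, Real.cos φ * Real.cos (φ - θ) =
    (Real.sin (2*b - θ)/4 + b * Real.cos θ/2) - (Real.sin (2*a - θ)/4 + a * Real.cos θ/2) := by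
  apply intervalIntegral.integral_eq_sub_of_hasDerivAt (fun x _ => Hderiv' θ x)
  exact Continuous.intervalIntegrable (by continuity) a b

private lemma angular' (θ : ℝ) (h0 : 0 ≤ θ) (h1 : θ ≤ π/2) :
    ∫ φ in (-π)..π, (|Real.cos φ * Real.cos (φ - θ)| - Real.cos φ * Real.cos (φ - θ)) =
      2*(Real.sin θ - θ * Real.cos θ) := by
  have pi_pos := Real.pi_pos
  set K : ℝ → ℝ := fun φ => |Real.cos φ * Real.cos (φ - θ)| - Real.cos φ * Real.cos (φ - θ)
    with hK
  have hKcont : Continuous K := by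
    apply Continuous.sub
    · exact (continuous_cos.mul (by continuity)).abs
    · exact continuous_cos.mul (by continuity)
  have hII : ∀ a b : ℝ, IntervalIntegrable K volume a b := fun a b => hKcont.intervalIntegrable a b
  have o1 : (-π) ≤ -(π/2) := by linarith
  have o2 : -(π/2) ≤ θ - π/2 := by linarith
  have o3 : θ - π/2 ≤ π/2 := by linarith
  have o4 : (π/2 : ℝ) ≤ θ + π/2 := by linarith
  have o5 : θ + π/2 ≤ π := by linarith
  have split : ∫ φ in (-π)..π, K φ =
      (∫ φ in (-π)..(-(π/2)), K φ) + (∫ φ in (-(π/2))..(θ - π/2), K φ) +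
      (∫ φ in (θ - π/2)..(π/2), K φ) + (∫ φ in (π/2)..(θ + π/2), K φ) +
      (∫ φ in (θ + π/2)..π, K φ) := by
    rw [integral_add_adjacent_intervals (hII _ _) (hII _ _),
        integral_add_adjacent_intervals (hII _ _) (hII _ _),
        integral_add_adjacent_intervals (hII _ _) (hII _ _),
        integral_add_adjacent_intervals (hII _ _) (hII _ _)]
  have hz1 : (∫ φ in (-π)..(-(π/2)), K φ) = 0 := by
    rw [intervalIntegral.integral_congr (g := fun _ => (0:ℝ)) ?_, intervalIntegral.integral_zero]
    intro x hx
    rw [Set.uIcc_of_le o1] at hx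
    have hc1 : Real.cos x ≤ 0 := by
      rw [← Real.cos_neg]
      exact Real.cos_nonpos_of_pi_div_two_le_of_le (by linarith [hx.2]) (by linarith [hx.1])
    have hc2 : Real.cos (x - θ) ≤ 0 := by
      rw [← Real.cos_neg, neg_sub]
      exact Real.cos_nonpos_of_pi_div_two_le_of_le (by linarith [hx.2]) (by linarith [hx.1])
    have : 0 ≤ Real.cos x * Real.cos (x - θ) := mul_nonneg_iff.2 (Or.inr ⟨hc1, hc2⟩)
    simp only [hK, abs_of_nonneg this, sub_self]
  have hz3 : (∫ φ in (θ - π/2)..(π/2), K φ) = 0 := by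
    rw [intervalIntegral.integral_congr (g := fun _ => (0:ℝ)) ?_, intervalIntegral.integral_zero]
    intro x hx
    rw [Set.uIcc_of_le o3] at hx
    have hc1 : 0 ≤ Real.cos x :=
      Real.cos_nonneg_of_mem_Icc ⟨by linarith [hx.1], hx.2⟩
    have hc2 : 0 ≤ Real.cos (x - θ) :=
      Real.cos_nonneg_of_mem_Icc ⟨by linarith [hx.1], by linarith [hx.2]⟩
    have : 0 ≤ Real.cos x * Real.cos (x - θ) := mul_nonneg hc1 hc2
    simp only [hK, abs_of_nonneg this, sub_self]
  have hz5 : (∫ φ in (θ + π/2)..π, K φ) = 0 := by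
    rw [intervalIntegral.integral_congr (g := fun _ => (0:ℝ)) ?_, intervalIntegral.integral_zero]
    intro x hx
    rw [Set.uIcc_of_le o5] at hx
    have hc1 : Real.cos x ≤ 0 :=
      Real.cos_nonpos_of_pi_div_two_le_of_le (by linarith [hx.1]) (by linarith [hx.2])
    have hc2 : Real.cos (x - θ) ≤ 0 :=
      Real.cos_nonpos_of_pi_div_two_le_of_le (by linarith [hx.1]) (by linarith [hx.2])
    have : 0 ≤ Real.cos x * Real.cos (x - θ) := mul_nonneg_iff.2 (Or.inr ⟨hc1, hc2⟩)
    simp only [hK, abs_of_nonneg this, sub_self]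
  have hn2 : (∫ φ in (-(π/2))..(θ - π/2), K φ) =
      (-2) * ∫ φ in (-(π/2))..(θ - π/2), Real.cos φ * Real.cos (φ - θ) := by
    rw [← intervalIntegral.integral_const_mul]
    apply intervalIntegral.integral_congr
    intro x hx
    rw [Set.uIcc_of_le o2] at hx
    have hc1 : 0 ≤ Real.cos x :=
      Real.cos_nonneg_of_mem_Icc ⟨by linarith [hx.1], by linarith [hx.2]⟩
    have hc2 : Real.cos (x - θ) ≤ 0 := by
      rw [← Real.cos_neg, neg_sub]
      exact Real.cos_nonpos_of_pi_div_two_le_of_le (by linarith [hx.2]) (by linarith [hx.1])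
    have : Real.cos x * Real.cos (x - θ) ≤ 0 := mul_nonpos_iff.2 (Or.inl ⟨hc1, hc2⟩)
    simp only [hK, abs_of_nonpos this]
    ring
  have hn4 : (∫ φ in (π/2)..(θ + π/2), K φ) =
      (-2) * ∫ φ in (π/2)..(θ + π/2), Real.cos φ * Real.cos (φ - θ) := by
    rw [← intervalIntegral.integral_const_mul]
    apply intervalIntegral.integral_congr
    intro x hx
    rw [Set.uIcc_of_le o4] at hx
    have hc1 : Real.cos x ≤ 0 :=
      Real.cos_nonpos_of_pi_div_two_le_of_le (by linarith [hx.1]) (by linarith [hx.2])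
    have hc2 : 0 ≤ Real.cos (x - θ) :=
      Real.cos_nonneg_of_mem_Icc ⟨by linarith [hx.1], by linarith [hx.2]⟩
    have : Real.cos x * Real.cos (x - θ) ≤ 0 := mul_nonpos_iff.2 (Or.inr ⟨hc1, hc2⟩)
    simp only [hK, abs_of_nonpos this]
    ring
  rw [split, hz1, hz3, hz5, hn2, hn4, integral_h', integral_h']
  have e1 : 2*(θ - π/2) - θ = θ - π := by ring
  have e2 : 2*(-(π/2)) - θ = -(θ + π) := by ring
  have e3 : 2*(θ + π/2) - θ = θ + π := by ring
  have e4 : 2*(π/2) - θ = π - θ := by ring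
  rw [e1, e2, e3, e4, Real.sin_sub_pi, Real.sin_neg, Real.sin_pi_sub, Real.sin_add_pi]
  ring

private lemma gauss_prod_eq' : (gaussianReal 0 1).prod (gaussianReal 0 1) =
    (volume : Measure (ℝ × ℝ)).withDensity
      (fun p => gaussianPDF 0 1 p.1 * gaussianPDF 0 1 p.2) := by
  refine Measure.prod_eq ?_
  intro s t hs ht
  rw [Measure.volume_eq_prod, withDensity_apply _ (hs.prod ht), ← Measure.prod_restrict,
      lintegral_prod_mul (measurable_gaussianPDF 0 1).aemeasurable
        (measurable_gaussianPDF 0 1).aemeasurable,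
      gaussianReal_of_var_ne_zero 0 one_ne_zero, withDensity_apply _ hs, withDensity_apply _ ht]

private lemma smul_step' (F : ℝ × ℝ → ℝ) :
    ∫ p, F p ∂((gaussianReal 0 1).prod (gaussianReal 0 1)) =
    ∫ p : ℝ × ℝ, ((2*π)⁻¹ * Real.exp (-((p.1^2 + p.2^2)/2))) * F p := by
  rw [gauss_prod_eq']
  have hN : Measurable (fun p : ℝ × ℝ =>
      (gaussianPDFReal 0 1 p.1).toNNReal * (gaussianPDFReal 0 1 p.2).toNNReal) :=
    (measurable_real_toNNReal.comp ((measurable_gaussianPDFReal 0 1).comp measurable_fst)).mul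
      (measurable_real_toNNReal.comp ((measurable_gaussianPDFReal 0 1).comp measurable_snd))
  have hdens : (fun p : ℝ × ℝ => gaussianPDF 0 1 p.1 * gaussianPDF 0 1 p.2) =
      fun p : ℝ × ℝ => (((gaussianPDFReal 0 1 p.1).toNNReal * (gaussianPDFReal 0 1 p.2).toNNReal
        : ℝ≥0) : ℝ≥0∞) := by
    funext p
    simp [gaussianPDF, ENNReal.coe_mul, ENNReal.ofReal]
  rw [hdens, integral_withDensity_eq_integral_smul hN]
  congr 1
  funext p
  rw [NNReal.smul_def, NNReal.coe_mul, Real.coe_toNNReal _ (gaussianPDFReal_nonneg 0 1 _),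
      Real.coe_toNNReal _ (gaussianPDFReal_nonneg 0 1 _)]
  have hw : ∀ x : ℝ, gaussianPDFReal 0 1 x = (Real.sqrt (2*π))⁻¹ * Real.exp (-(x^2/2)) := by
    intro x
    simp only [gaussianPDFReal, NNReal.coe_one, mul_one, sub_zero]
    rw [show -x^2/2 = -(x^2/2) by ring]
  rw [hw, hw]
  have h2π : (0:ℝ) ≤ 2*π := by positivity
  have : (Real.sqrt (2*π))⁻¹ * Real.exp (-(p.1^2/2)) *
      ((Real.sqrt (2*π))⁻¹ * Real.exp (-(p.2^2/2)))
      = (2*π)⁻¹ * Real.exp (-((p.1^2 + p.2^2)/2)) := by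
    rw [show -((p.1^2 + p.2^2)/2) = -(p.1^2/2) + -(p.2^2/2) by ring, Real.exp_add,
        ← Real.sq_sqrt h2π]
    field_simp
    rw [Real.sq_sqrt (by positivity), Real.sq_sqrt (by positivity)]
  rw [this, smul_eq_mul]

private lemma polar_step' (θ : ℝ) :
    (∫ p : ℝ × ℝ, ((2*π)⁻¹ * Real.exp (-((p.1^2 + p.2^2)/2))) *
      (|p.1 * (p.1 * Real.cos θ + p.2 * Real.sin θ)| -
        p.1 * (p.1 * Real.cos θ + p.2 * Real.sin θ))) =
    (∫ r in Set.Ioi (0:ℝ), (2*π)⁻¹ * (r^3 * Real.exp (-(r^2/2)))) *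
    (∫ φ in Set.Ioo (-π) π,
      (|Real.cos φ * Real.cos (φ - θ)| - Real.cos φ * Real.cos (φ - θ))) := by
  set G : ℝ × ℝ → ℝ := fun p => ((2*π)⁻¹ * Real.exp (-((p.1^2 + p.2^2)/2))) *
      (|p.1 * (p.1 * Real.cos θ + p.2 * Real.sin θ)| -
        p.1 * (p.1 * Real.cos θ + p.2 * Real.sin θ)) with hG
  rw [← integral_comp_polarCoord_symm G]
  have key : ∀ p : ℝ × ℝ, p.1 • G (polarCoord.symm p) =
      ((2*π)⁻¹ * (p.1^3 * Real.exp (-(p.1^2/2)))) *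
      (|Real.cos p.2 * Real.cos (p.2 - θ)| - Real.cos p.2 * Real.cos (p.2 - θ)) := by
    rintro ⟨r, φ⟩
    simp only [hG, polarCoord_symm_apply, smul_eq_mul]
    have h1 : (r * Real.cos φ)^2 + (r * Real.sin φ)^2 = r^2 := by
      have := Real.sin_sq_add_cos_sq φ
      nlinarith
    have h2 : r * Real.cos φ * (r * Real.cos φ * Real.cos θ + r * Real.sin φ * Real.sin θ)
        = r^2 * (Real.cos φ * Real.cos (φ - θ)) := by
      rw [Real.cos_sub]; ring
    rw [h1, h2, abs_mul, abs_of_nonneg (sq_nonneg r)]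
    ring
  rw [show polarCoord.target = Set.Ioi (0:ℝ) ×ˢ Set.Ioo (-π) π from rfl]
  rw [show (fun p : ℝ × ℝ => p.1 • G (polarCoord.symm p)) =
      (fun p : ℝ × ℝ => ((2*π)⁻¹ * (p.1^3 * Real.exp (-(p.1^2/2)))) *
      (|Real.cos p.2 * Real.cos (p.2 - θ)| - Real.cos p.2 * Real.cos (p.2 - θ)))
    from funext key]
  rw [Measure.volume_eq_prod, ← Measure.prod_restrict]
  exact integral_prod_mul (μ := volume.restrict (Set.Ioi 0))
    (ν := volume.restrict (Set.Ioo (-π) π))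
    (fun r : ℝ => (2*π)⁻¹ * (r^3 * Real.exp (-(r^2/2))))
    (fun φ : ℝ => |Real.cos φ * Real.cos (φ - θ)| - Real.cos φ * Real.cos (φ - θ))

private lemma sin_sub_mul_cos_pos' {t : ℝ} (ht : 0 < t) (ht2 : t ≤ π/2) :
    0 < Real.sin t - t * Real.cos t := by
  rcases lt_or_eq_of_le ht2 with h | h
  · have hc : 0 < Real.cos t := Real.cos_pos_of_mem_Ioo ⟨by linarith [Real.pi_pos], h⟩
    have htan := Real.lt_tan ht h
    rw [Real.tan_eq_sin_div_cos] at htan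
    have := (lt_div_iff₀ hc).1 htan
    linarith
  · rw [h]
    simp [Real.sin_pi_div_two, Real.cos_pi_div_two]

end Aux

/-- For independent standard Gaussians `a₁, a₂` and `θ ∈ [0, π/2]`, with
`ξ = a₁ (a₁ cos θ + a₂ sin θ)`, one has
`E(|ξ| − ξ) = (2/π)(sin θ + (π/2 − θ) cos θ) − cos θ = f(θ) ≥ 0`,
with equality iff `θ = 0`. -/
theorem expectation_abs_sub_self (θ : ℝ) (hθ : θ ∈ Set.Icc 0 (π / 2)) :
    (∫ a : ℝ × ℝ,
        (|a.1 * (a.1 * Real.cos θ + a.2 * Real.sin θ)| -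
          a.1 * (a.1 * Real.cos θ + a.2 * Real.sin θ))
        ∂((gaussianReal 0 1).prod (gaussianReal 0 1)) =
      (2 / π) * (Real.sin θ + (π / 2 - θ) * Real.cos θ) - Real.cos θ) ∧
    (0 ≤ (2 / π) * (Real.sin θ + (π / 2 - θ) * Real.cos θ) - Real.cos θ) ∧
    ((2 / π) * (Real.sin θ + (π / 2 - θ) * Real.cos θ) - Real.cos θ = 0 ↔ θ = 0) := by
  obtain ⟨h0, h1⟩ := hθ
  have pi_pos := Real.pi_pos
  have hπ : (π : ℝ) ≠ 0 := ne_of_gt pi_pos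
  have hE : (2 / π) * (Real.sin θ + (π / 2 - θ) * Real.cos θ) - Real.cos θ =
      (2 / π) * (Real.sin θ - θ * Real.cos θ) := by
    field_simp
    ring
  refine ⟨?_, ?_, ?_⟩
  · rw [smul_step', polar_step']
    rw [MeasureTheory.integral_const_mul, radial_int']
    have : (∫ φ in Set.Ioo (-π) π,
        (|Real.cos φ * Real.cos (φ - θ)| - Real.cos φ * Real.cos (φ - θ))) =
        ∫ φ in (-π)..π, (|Real.cos φ * Real.cos (φ - θ)| - Real.cos φ * Real.cos (φ - θ)) := by
      rw [intervalIntegral.integral_of_le (by linarith), MeasureTheory.integral_Ioc_eq_integral_Ioo]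
    rw [this, angular' θ h0 h1, hE]
    field_simp
  · rw [hE]
    rcases eq_or_lt_of_le h0 with h | h
    · rw [← h]; simp
    · have := sin_sub_mul_cos_pos' h h1
      positivity
  · rw [hE]
    constructor
    · intro h
      by_contra hne
      have hpos : 0 < θ := lt_of_le_of_ne h0 (Ne.symm hne)
      have h2 := sin_sub_mul_cos_pos' hpos h1
      have : (0:ℝ) < (2 / π) * (Real.sin θ - θ * Real.cos θ) := by positivity
      linarith
    · intro h
      rw [h]
      simp
end

section
/- The Gaussian width of the set K_{d,s} = {x ∈ ℝ^d : ‖x‖₂ ≤ 1, ‖x‖₁ ≤ √s} satisfies w(K_{d,s}) ≤ C√(s log(ed/s)) for an absolute constant C, where w(T) = E sup_{x∈T} ⟨g, x⟩ with g ~ N(0, I_d). -/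
open MeasureTheory Real ProbabilityTheory
open scoped ENNReal NNReal

lemma gauss_exp_integrable : Integrable (fun x : ℝ => Real.exp (x^2/4)) (gaussianReal 0 1) := by
  rw [gaussianReal_of_var_ne_zero _ one_ne_zero]
  have : (gaussianPDF 0 1) = fun x => ((gaussianPDFReal 0 1 x).toNNReal : ℝ≥0∞) := by
    ext x; simp [gaussianPDF, ENNReal.ofReal]
  rw [this, integrable_withDensity_iff_integrable_smul]
  · apply Integrable.congr ((integrable_exp_neg_mul_sq (by norm_num : (0:ℝ) < 1/4)).const_mul
      ((Real.sqrt (2 * π))⁻¹))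
    filter_upwards with x
    rw [NNReal.smul_def, smul_eq_mul, Real.coe_toNNReal _ (gaussianPDFReal_nonneg _ _ _)]
    simp only [gaussianPDFReal, NNReal.coe_one, mul_one]
    rw [mul_assoc, ← Real.exp_add]
    norm_num
    ring_nf
    tauto
  · exact (measurable_gaussianPDFReal 0 1).real_toNNReal

lemma gauss_exp_integral : ∫ x, Real.exp (x^2/4) ∂(gaussianReal 0 1) = Real.sqrt 2 := by
  rw [gaussianReal_of_var_ne_zero _ one_ne_zero]
  have : (gaussianPDF 0 1) = fun x => ((gaussianPDFReal 0 1 x).toNNReal : ℝ≥0∞) := by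
    ext x; simp [gaussianPDF, ENNReal.ofReal]
  rw [this, integral_withDensity_eq_integral_smul ((measurable_gaussianPDFReal 0 1).real_toNNReal)]
  have heq : ∀ x : ℝ, (gaussianPDFReal 0 1 x).toNNReal • Real.exp (x^2/4)
      = (Real.sqrt (2*π))⁻¹ * Real.exp (-(1/4) * x^2) := by
    intro x
    rw [NNReal.smul_def, smul_eq_mul, Real.coe_toNNReal _ (gaussianPDFReal_nonneg _ _ _)]
    simp only [gaussianPDFReal, NNReal.coe_one, mul_one]
    rw [mul_assoc, ← Real.exp_add]
    norm_num
    ring_nf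
    tauto
  simp_rw [heq]
  rw [integral_const_mul, integral_gaussian]
  rw [← Real.sqrt_inv, ← Real.sqrt_mul (by positivity)]
  rw [show (2*π)⁻¹ * (π / (1/4)) = 2 by field_simp; ring]

lemma pi_integral_prod {d : ℕ} (μ : Measure ℝ) [SigmaFinite μ] (f : Fin d → ℝ → ℝ) :
    ∫ g : Fin d → ℝ, ∏ i, f i (g i) ∂(Measure.pi fun _ => μ) = ∏ i, ∫ x, f i x ∂μ := by
  letI : MeasureSpace ℝ := ⟨μ⟩
  haveI : SigmaFinite (volume : Measure ℝ) := ‹SigmaFinite μ›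
  exact MeasureTheory.integral_fintype_prod_eq_prod f

lemma pi_integrable_prod {d : ℕ} (μ : Measure ℝ) [SigmaFinite μ] (f : Fin d → ℝ → ℝ)
    (hf : ∀ i, Integrable (f i) μ) :
    Integrable (fun g : Fin d → ℝ => ∏ i, f i (g i)) (Measure.pi fun _ => μ) := by
  letI : MeasureSpace ℝ := ⟨μ⟩
  haveI : SigmaFinite (volume : Measure ℝ) := ‹SigmaFinite μ›
  exact MeasureTheory.Integrable.fintype_prod hf

lemma chi_eq_prod {d : ℕ} (I : Finset (Fin d)) (g : Fin d → ℝ) :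
    Real.exp ((∑ i ∈ I, g i ^ 2) / 4)
      = ∏ i, (if i ∈ I then Real.exp ((g i) ^ 2 / 4) else 1) := by
  rw [Finset.prod_ite_mem, Finset.univ_inter, ← Real.exp_sum, Finset.sum_div]

lemma chi_integrable {d : ℕ} (I : Finset (Fin d)) :
    Integrable (fun g : Fin d → ℝ => Real.exp ((∑ i ∈ I, g i ^ 2) / 4))
      (Measure.pi fun _ => gaussianReal 0 1) := by
  simp_rw [chi_eq_prod]
  exact pi_integrable_prod _ (fun i x => if i ∈ I then Real.exp (x ^ 2 / 4) else 1)
    (fun i => by split_ifs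
                 · exact gauss_exp_integrable
                 · exact integrable_const 1)

lemma chi_integral {d : ℕ} (I : Finset (Fin d)) :
    ∫ g : Fin d → ℝ, Real.exp ((∑ i ∈ I, g i ^ 2) / 4) ∂(Measure.pi fun _ => gaussianReal 0 1)
      = Real.sqrt 2 ^ I.card := by
  simp_rw [chi_eq_prod]
  rw [pi_integral_prod _ (fun i x => if i ∈ I then Real.exp (x ^ 2 / 4) else 1)]
  have : ∀ i, (∫ x, (if i ∈ I then Real.exp (x ^ 2 / 4) else 1) ∂(gaussianReal 0 1))
      = if i ∈ I then Real.sqrt 2 else 1 := by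
    intro i; split_ifs
    · exact gauss_exp_integral
    · simp
  simp_rw [this]
  rw [Finset.prod_ite_mem, Finset.univ_inter, Finset.prod_const]

lemma det1 {d s : ℕ} (hs1 : 1 ≤ s)
    (hP : (Finset.powersetCard s (Finset.univ : Finset (Fin d))).Nonempty)
    (g x : Fin d → ℝ)
    (hx2 : Real.sqrt (∑ j, (x j)^2) ≤ 1) (hx1 : ∑ j, |x j| ≤ Real.sqrt s) :
    ∑ j, g j * x j ≤
      2 * Real.sqrt ((Finset.powersetCard s (Finset.univ : Finset (Fin d))).sup' hP
        (fun I => ∑ i ∈ I, g i ^ 2)) := by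
  obtain ⟨T, hTP, hTmax⟩ :=
    Finset.exists_mem_eq_sup' hP (fun I => ∑ i ∈ I, g i ^ 2)
  have hTcard : T.card = s := (Finset.mem_powersetCard.mp hTP).2
  set m := Real.sqrt (∑ i ∈ T, g i ^ 2) with hm
  have hchi_nonneg : (0:ℝ) ≤ ∑ i ∈ T, g i ^ 2 :=
    Finset.sum_nonneg fun i _ => sq_nonneg _
  have hm0 : 0 ≤ m := Real.sqrt_nonneg _
  have hss : (0:ℝ) < Real.sqrt s := by
    apply Real.sqrt_pos.mpr; exact_mod_cast Nat.lt_of_lt_of_le Nat.zero_lt_one hs1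
  -- key : each coordinate outside T is small
  have key : ∀ j ∉ T, Real.sqrt s * |g j| ≤ m := by
    intro j hj
    have hij : ∀ i ∈ T, g j ^ 2 ≤ g i ^ 2 := by
      intro i hi
      have hji : j ∉ T.erase i := fun h => hj (Finset.mem_of_mem_erase h)
      have hT' : insert j (T.erase i) ∈ Finset.powersetCard s (Finset.univ : Finset (Fin d)) := by
        rw [Finset.mem_powersetCard]
        refine ⟨Finset.subset_univ _, ?_⟩
        rw [Finset.card_insert_of_notMem hji, Finset.card_erase_of_mem hi, hTcard]
        omega
      have hle : ∑ k ∈ insert j (T.erase i), g k ^ 2 ≤ ∑ i ∈ T, g i ^ 2 := by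
        rw [← hTmax]; exact Finset.le_sup' (fun I => ∑ i ∈ I, g i ^ 2) hT'
      rw [Finset.sum_insert hji] at hle
      have herase : g i ^ 2 + ∑ k ∈ T.erase i, g k ^ 2 = ∑ k ∈ T, g k ^ 2 :=
        Finset.add_sum_erase T (fun k => g k ^ 2) hi
      linarith
    have hs2 : (s : ℝ) * g j ^ 2 ≤ ∑ i ∈ T, g i ^ 2 := by
      calc (s:ℝ) * g j ^ 2 = ∑ _i ∈ T, g j ^ 2 := by
            rw [Finset.sum_const, hTcard, nsmul_eq_mul]
        _ ≤ _ := Finset.sum_le_sum hij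
    calc Real.sqrt s * |g j| = Real.sqrt ((s:ℝ) * g j ^ 2) := by
          rw [Real.sqrt_mul (Nat.cast_nonneg s), Real.sqrt_sq_eq_abs]
      _ ≤ m := Real.sqrt_le_sqrt hs2
  have hx2' : ∑ j, (x j)^2 ≤ 1 := by
    nlinarith [Real.sq_sqrt (Finset.sum_nonneg fun j (_ : j ∈ Finset.univ) => sq_nonneg (x j)),
      Real.sqrt_nonneg (∑ j, (x j)^2)]
  have hsplit : ∑ j, g j * x j = ∑ j ∈ T, g j * x j + ∑ j ∈ Tᶜ, g j * x j :=
    (Finset.sum_add_sum_compl T _).symm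
  have b1 : ∑ j ∈ T, g j * x j ≤ m := by
    have cs := Finset.sum_mul_sq_le_sq_mul_sq T g x
    have hxT : ∑ i ∈ T, x i ^ 2 ≤ 1 := by
      refine le_trans ?_ hx2'
      exact Finset.sum_le_sum_of_subset_of_nonneg (Finset.subset_univ T)
        (fun i _ _ => sq_nonneg _)
    have h1 : (∑ i ∈ T, g i * x i)^2 ≤ ∑ i ∈ T, g i ^ 2 := by nlinarith
    calc ∑ i ∈ T, g i * x i ≤ |∑ i ∈ T, g i * x i| := le_abs_self _
      _ = Real.sqrt ((∑ i ∈ T, g i * x i)^2) := (Real.sqrt_sq_eq_abs _).symm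
      _ ≤ m := Real.sqrt_le_sqrt h1
  have b2 : ∑ j ∈ Tᶜ, g j * x j ≤ m := by
    have step : Real.sqrt s * ∑ j ∈ Tᶜ, g j * x j ≤ m * Real.sqrt s := by
      rw [Finset.mul_sum]
      calc ∑ j ∈ Tᶜ, Real.sqrt s * (g j * x j)
          ≤ ∑ j ∈ Tᶜ, m * |x j| := by
            refine Finset.sum_le_sum fun j hj => ?_
            have hjT : j ∉ T := Finset.mem_compl.mp hj
            have h1 : Real.sqrt s * (g j * x j) ≤ Real.sqrt s * (|g j| * |x j|) := by
              apply mul_le_mul_of_nonneg_left _ (le_of_lt hss)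
              rw [← abs_mul]; exact le_abs_self _
            have h2 : Real.sqrt s * (|g j| * |x j|) ≤ m * |x j| := by
              rw [← mul_assoc]
              exact mul_le_mul_of_nonneg_right (key j hjT) (abs_nonneg _)
            linarith
        _ = m * ∑ j ∈ Tᶜ, |x j| := by rw [Finset.mul_sum]
        _ ≤ m * Real.sqrt s := by
            apply mul_le_mul_of_nonneg_left _ hm0
            refine le_trans ?_ hx1
            exact Finset.sum_le_sum_of_subset_of_nonneg (Finset.subset_univ _)
              (fun i _ _ => abs_nonneg _)
    have := (mul_le_mul_iff_right₀ hss).mp (by linarith [step] :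
      Real.sqrt s * ∑ j ∈ Tᶜ, g j * x j ≤ Real.sqrt s * m)
    exact this
  rw [hsplit, hTmax]
  linarith

set_option maxHeartbeats 1000000 in
/-- The Gaussian width of `K_{d,s} = {x : ‖x‖₂ ≤ 1, ‖x‖₁ ≤ √s}` satisfies
`w(K_{d,s}) ≤ C √(s log(e d / s))` for an absolute constant `C`. -/
theorem gaussian_width_Kds :
    ∃ C : ℝ, 0 < C ∧ ∀ d s : ℕ, 1 ≤ s → s ≤ d →
      ∫ g : Fin d → ℝ,
          sSup ((fun x : Fin d → ℝ => ∑ j, g j * x j) ''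
            {x : Fin d → ℝ |
              Real.sqrt (∑ j, (x j) ^ 2) ≤ 1 ∧ ∑ j, |x j| ≤ Real.sqrt s})
          ∂(Measure.pi fun _ => gaussianReal 0 1) ≤
        C * Real.sqrt (s * Real.log (Real.exp 1 * d / s)) := by
  refine ⟨6, by norm_num, fun d s hs1 hsd => ?_⟩
  set μd := (Measure.pi fun _ : Fin d => gaussianReal 0 1) with hμd
  haveI : IsProbabilityMeasure μd := by rw [hμd]; infer_instance
  have hP : (Finset.powersetCard s (Finset.univ : Finset (Fin d))).Nonempty := by
    rw [Finset.powersetCard_nonempty]; simpa using hsd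
  set P := Finset.powersetCard s (Finset.univ : Finset (Fin d)) with hPdef
  set L := Real.log (Real.exp 1 * d / s) with hLdef
  have hs1' : (1:ℝ) ≤ (s:ℝ) := by exact_mod_cast hs1
  have hds : (s:ℝ) ≤ (d:ℝ) := by exact_mod_cast hsd
  have hspos : (0:ℝ) < s := by linarith
  have hdpos : (0:ℝ) < d := by linarith
  have hLge : 1 ≤ L := by
    rw [hLdef, Real.le_log_iff_exp_le (by positivity)]
    rw [mul_div_assoc]
    nlinarith [Real.exp_pos 1, (one_le_div hspos).mpr hds]
  have hrpos : 0 < Real.sqrt ((s:ℝ) * L) := Real.sqrt_pos.mpr (by nlinarith)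
  set r := Real.sqrt ((s:ℝ) * L) with hrdef
  have hr2 : r^2 = (s:ℝ) * L := Real.sq_sqrt (by nlinarith)
  set t := 3 * r with htdef
  have ht0 : 0 < t := by positivity
  set N := ((d.choose s : ℕ) : ℝ) with hNdef
  have hN1 : (1:ℝ) ≤ N := by
    rw [hNdef]; exact_mod_cast Nat.one_le_iff_ne_zero.mpr (Nat.choose_pos hsd).ne'
  set B := N * Real.sqrt 2 ^ s with hBdef
  have hBpos : (0:ℝ) < B := by
    have : (0:ℝ) < Real.sqrt 2 := by positivity
    positivity
  set Z := fun g : Fin d → ℝ => ∑ I ∈ P, Real.exp ((∑ i ∈ I, g i ^ 2) / 4) with hZdef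
  have hZpos : ∀ g, 0 < Z g := fun g => Finset.sum_pos (fun I _ => Real.exp_pos _) hP
  have hZint : Integrable Z μd := integrable_finset_sum P (fun I _ => chi_integrable I)
  have hZval : ∫ g, Z g ∂μd = B := by
    rw [hZdef]
    rw [integral_finset_sum P (fun I _ => chi_integrable I)]
    have hcongr : ∀ I ∈ P, (∫ g : Fin d → ℝ, Real.exp ((∑ i ∈ I, g i ^ 2) / 4) ∂μd)
        = Real.sqrt 2 ^ s := by
      intro I hI
      rw [hμd, chi_integral, (Finset.mem_powersetCard.mp hI).2]
    rw [Finset.sum_congr rfl hcongr, Finset.sum_const, hBdef, hPdef,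
      Finset.card_powersetCard, Finset.card_univ, Fintype.card_fin, nsmul_eq_mul, hNdef]
  -- pointwise bound
  have hpt : ∀ g : Fin d → ℝ,
      sSup ((fun x : Fin d → ℝ => ∑ j, g j * x j) ''
          {x : Fin d → ℝ |
            Real.sqrt (∑ j, (x j) ^ 2) ≤ 1 ∧ ∑ j, |x j| ≤ Real.sqrt s}) ≤
        (4/(t*B)) * Z g + ((4/t) * (Real.log B - 1) + t) := by
    intro g
    set a := P.sup' hP (fun I => ∑ i ∈ I, g i ^ 2) with ha
    have ha0 : 0 ≤ a := by
      obtain ⟨T, hT⟩ := hP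
      exact le_trans (Finset.sum_nonneg fun i _ => sq_nonneg _)
        (Finset.le_sup' (fun I => ∑ i ∈ I, g i ^ 2) hT)
    have h1 : sSup ((fun x : Fin d → ℝ => ∑ j, g j * x j) ''
          {x : Fin d → ℝ |
            Real.sqrt (∑ j, (x j) ^ 2) ≤ 1 ∧ ∑ j, |x j| ≤ Real.sqrt s}) ≤
        2 * Real.sqrt a := by
      apply Real.sSup_le
      · rintro y ⟨x, ⟨hx2, hx1⟩, rfl⟩
        exact det1 hs1 hP g x hx2 hx1
      · positivity
    obtain ⟨T, hTP, hTmax⟩ := Finset.exists_mem_eq_sup' hP (fun I => ∑ i ∈ I, g i ^ 2)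
    have h2 : a ≤ 4 * Real.log (Z g) := by
      have hexpZ : Real.exp (a/4) ≤ Z g := by
        rw [ha, hTmax]
        exact Finset.single_le_sum (f := fun I => Real.exp ((∑ i ∈ I, g i ^ 2) / 4))
          (fun I _ => (Real.exp_pos _).le) hTP
      have hlog := Real.log_le_log (Real.exp_pos _) hexpZ
      rw [Real.log_exp] at hlog
      linarith
    have h3 : 2 * Real.sqrt a ≤ a/t + t := by
      rw [div_add' _ _ _ ht0.ne', le_div_iff₀ ht0]
      nlinarith [sq_nonneg (Real.sqrt a - t), Real.sq_sqrt ha0, Real.sqrt_nonneg a, ht0]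
    have h4 : Real.log (Z g) ≤ Z g / B + Real.log B - 1 := by
      have hd4 := Real.log_le_sub_one_of_pos (div_pos (hZpos g) hBpos)
      rw [Real.log_div (hZpos g).ne' hBpos.ne'] at hd4
      linarith
    have h5 : a/t + t ≤ (4 * (Z g / B + Real.log B - 1))/t + t := by
      exact add_le_add_left ((div_le_div_iff_of_pos_right ht0).mpr (by linarith)) t
    have h6 : (4 * (Z g / B + Real.log B - 1))/t + t
        = (4/(t*B)) * Z g + ((4/t) * (Real.log B - 1) + t) := by
      field_simp
      ring
    calc sSup _ ≤ 2 * Real.sqrt a := h1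
      _ ≤ a/t + t := h3
      _ ≤ (4 * (Z g / B + Real.log B - 1))/t + t := h5
      _ = _ := h6
  -- nonnegativity of integrand
  have hnn : ∀ g : Fin d → ℝ, 0 ≤
      sSup ((fun x : Fin d → ℝ => ∑ j, g j * x j) ''
          {x : Fin d → ℝ |
            Real.sqrt (∑ j, (x j) ^ 2) ≤ 1 ∧ ∑ j, |x j| ≤ Real.sqrt s}) := by
    intro g
    have hmem : (0:ℝ) ∈ (fun x : Fin d → ℝ => ∑ j, g j * x j) ''
        {x : Fin d → ℝ |
          Real.sqrt (∑ j, (x j) ^ 2) ≤ 1 ∧ ∑ j, |x j| ≤ Real.sqrt s} := by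
      refine ⟨0, ⟨?_, ?_⟩, by simp⟩
      · simp
      · simp [Real.sqrt_nonneg]
    have hbdd : BddAbove ((fun x : Fin d → ℝ => ∑ j, g j * x j) ''
        {x : Fin d → ℝ |
          Real.sqrt (∑ j, (x j) ^ 2) ≤ 1 ∧ ∑ j, |x j| ≤ Real.sqrt s}) := by
      refine ⟨2 * Real.sqrt (P.sup' hP (fun I => ∑ i ∈ I, g i ^ 2)), ?_⟩
      rintro y ⟨x, ⟨hx2, hx1⟩, rfl⟩
      exact det1 hs1 hP g x hx2 hx1
    exact le_csSup hbdd hmem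
  -- integrate
  have hIle : ∫ g : Fin d → ℝ,
      sSup ((fun x : Fin d → ℝ => ∑ j, g j * x j) ''
          {x : Fin d → ℝ |
            Real.sqrt (∑ j, (x j) ^ 2) ≤ 1 ∧ ∑ j, |x j| ≤ Real.sqrt s}) ∂μd ≤
      (4/(t*B)) * B + ((4/t) * (Real.log B - 1) + t) := by
    have hint2 : Integrable (fun g => (4/(t*B)) * Z g + ((4/t) * (Real.log B - 1) + t)) μd :=
      (hZint.const_mul _).add (integrable_const _)
    have hm := integral_mono_of_nonneg (ae_of_all _ hnn) hint2 (ae_of_all _ hpt)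
    rwa [integral_add (hZint.const_mul _) (integrable_const _), integral_const_mul, hZval,
      integral_const, probReal_univ, one_smul] at hm
  refine le_trans hIle ?_
  -- final arithmetic
  have hlogB : Real.log B ≤ 2 * ((s:ℝ) * L) := by
    have hfac : ((s:ℝ))^s / (Nat.factorial s : ℝ) ≤ Real.exp s := by
      have h1 : ((s:ℝ))^s / (Nat.factorial s : ℝ)
          ≤ ∑ i ∈ Finset.range (s+1), (s:ℝ)^i / (Nat.factorial i : ℝ) :=
        Finset.single_le_sum (f := fun i => (s:ℝ)^i / (Nat.factorial i : ℝ))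
          (fun i _ => by positivity) (Finset.self_mem_range_succ s)
      exact h1.trans (Real.sum_le_exp_of_nonneg (by positivity) (s+1))
    have hNle : N ≤ (Real.exp 1 * d / s)^s := by
      have h1 : N ≤ (d:ℝ)^s / (Nat.factorial s : ℝ) := Nat.choose_le_pow_div s d
      have h2 : (d:ℝ)^s / (Nat.factorial s : ℝ)
          = ((d:ℝ)/s)^s * ((s:ℝ)^s / (Nat.factorial s : ℝ)) := by
        rw [div_pow]; field_simp
      have h3 : ((d:ℝ)/s)^s * ((s:ℝ)^s / (Nat.factorial s : ℝ)) ≤ ((d:ℝ)/s)^s * Real.exp s :=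
        mul_le_mul_of_nonneg_left hfac (by positivity)
      have h4 : (Real.exp 1 * d / s)^s = ((d:ℝ)/s)^s * Real.exp s := by
        rw [mul_div_assoc, mul_pow, ← Real.exp_nat_mul, mul_one, mul_comm]
      calc N ≤ (d:ℝ)^s / (Nat.factorial s : ℝ) := h1
        _ = ((d:ℝ)/s)^s * ((s:ℝ)^s / (Nat.factorial s : ℝ)) := h2
        _ ≤ ((d:ℝ)/s)^s * Real.exp s := h3
        _ = (Real.exp 1 * d / s)^s := h4.symm
    have hlogN : Real.log N ≤ (s:ℝ) * L := by
      have hh := Real.log_le_log (by linarith : (0:ℝ) < N) hNle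
      rwa [Real.log_pow, ← hLdef] at hh
    have hlog2 : Real.log (Real.sqrt 2 ^ s) ≤ (s:ℝ) * L / 2 := by
      rw [Real.log_pow, Real.log_sqrt (by norm_num)]
      have h2 : Real.log 2 ≤ 1 := by
        linarith [Real.log_le_sub_one_of_pos (by norm_num : (0:ℝ) < 2)]
      have hlog2nn : (0:ℝ) ≤ Real.log 2 := Real.log_nonneg (by norm_num)
      calc (s:ℝ) * (Real.log 2 / 2) ≤ (s:ℝ) * (1/2) := mul_le_mul_of_nonneg_left (by linarith) (Nat.cast_nonneg s)
        _ ≤ (s:ℝ) * L / 2 := by rw [mul_div_assoc]; exact mul_le_mul_of_nonneg_left (by linarith) (by positivity)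
    rw [hBdef, Real.log_mul (by linarith : (0:ℝ) < N).ne' (by positivity : (0:ℝ) < Real.sqrt 2 ^ s).ne']
    nlinarith [hlogN, hlog2]
  have hend : (4/(t*B)) * B + ((4/t) * (Real.log B - 1) + t) ≤ 6 * r := by
    have he1 : (4/(t*B)) * B = 4/t := by field_simp
    rw [he1]
    have he2 : 4/t + (4/t) * (Real.log B - 1) = (4/t) * Real.log B := by ring
    have he3 : (4/t) * Real.log B ≤ 3 * r := by
      rw [htdef, div_mul_eq_mul_div, div_le_iff₀ (by positivity)]
      nlinarith [hlogB, hrpos, hr2]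
    calc 4/t + ((4/t) * (Real.log B - 1) + t) = (4/t) * Real.log B + t := by ring
      _ ≤ 3 * r + t := by linarith [he3]
      _ = 6 * r := by rw [htdef]; ring
  exact hend
end

section
/- Let A ∈ ℝ^{m×d}, x̂, x₀ ∈ ℝ^d, η ∈ ℝ^m, y = |Ax₀| + η, h⁻ = x̂ − x₀, and let T₁ = {j : sign⟨aⱼ,x̂⟩ = 1 = sign⟨aⱼ,x₀⟩}, T₂ = {j : sign⟨aⱼ,x̂⟩ = −1 = sign⟨aⱼ,x₀⟩}. If ‖|Ax̂| − y‖² ≤ ‖η‖², then ‖A_{T₁∪T₂} h⁻‖² ≤ 2⟨h⁻, A_{T₁}^⊤ η_{T₁} − A_{T₂}^⊤ η_{T₂}⟩ + ‖η_{(T₁∪T₂)^c}‖². -/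
open Matrix

lemma pos_of_sign_eq_one' {x : ℝ} (h : Real.sign x = 1) : 0 < x := by
  rcases lt_trichotomy x 0 with hx | hx | hx
  · rw [Real.sign_of_neg hx] at h; norm_num at h
  · rw [hx, Real.sign_zero] at h; norm_num at h
  · exact hx

lemma neg_of_sign_eq_neg_one' {x : ℝ} (h : Real.sign x = -1) : x < 0 := by
  rcases lt_trichotomy x 0 with hx | hx | hx
  · exact hx
  · rw [hx, Real.sign_zero] at h; norm_num at h
  · rw [Real.sign_of_pos hx] at h; norm_num at h

/-- Key inequality: if `y = |Ax₀| + η` and `‖|Ax̂| − y‖² ≤ ‖η‖²`, then with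
`h⁻ = x̂ − x₀` and `T₁, T₂` the index sets where the signs of `⟨aⱼ, x̂⟩` and `⟨aⱼ, x₀⟩`
agree (both `+1`, resp. both `−1`),
`‖A_{T₁∪T₂} h⁻‖² ≤ 2⟨h⁻, A_{T₁}ᵀ η_{T₁} − A_{T₂}ᵀ η_{T₂}⟩ + ‖η_{(T₁∪T₂)ᶜ}‖²`. -/
theorem key_inequality {m d : ℕ} (A : Matrix (Fin m) (Fin d) ℝ)
    (x0 xh : Fin d → ℝ) (η y : Fin m → ℝ)
    (hy : y = fun j => |A.mulVec x0 j| + η j)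
    (T₁ T₂ : Finset (Fin m))
    (hT₁ : T₁ = Finset.univ.filter fun j =>
      Real.sign (A.mulVec xh j) = 1 ∧ Real.sign (A.mulVec x0 j) = 1)
    (hT₂ : T₂ = Finset.univ.filter fun j =>
      Real.sign (A.mulVec xh j) = -1 ∧ Real.sign (A.mulVec x0 j) = -1)
    (hmin : ∑ j, (|A.mulVec xh j| - y j) ^ 2 ≤ ∑ j, (η j) ^ 2) :
    ∑ j ∈ T₁ ∪ T₂, (A.mulVec (xh - x0) j) ^ 2 ≤
      2 * ((∑ j ∈ T₁, A.mulVec (xh - x0) j * η j) -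
            ∑ j ∈ T₂, A.mulVec (xh - x0) j * η j) +
        ∑ j ∈ (T₁ ∪ T₂)ᶜ, (η j) ^ 2 := by
  set f := A.mulVec (xh - x0) with hfdef
  have hf : ∀ j, f j = A.mulVec xh j - A.mulVec x0 j := by
    intro j; simp [hfdef, Matrix.mulVec_sub]
  have hdisj : Disjoint T₁ T₂ := by
    subst hT₁ hT₂
    simp only [Finset.disjoint_left, Finset.mem_filter]
    rintro j ⟨-, h1, -⟩ ⟨-, h2, -⟩
    rw [h1] at h2; norm_num at h2
  set g := fun j => (|A.mulVec xh j| - y j) ^ 2 with hgdef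
  -- the union sum of g is bounded
  have key : ∑ j ∈ T₁ ∪ T₂, g j ≤ ∑ j ∈ T₁ ∪ T₂, (η j)^2 + ∑ j ∈ (T₁ ∪ T₂)ᶜ, (η j)^2 := by
    calc ∑ j ∈ T₁ ∪ T₂, g j ≤ ∑ j, g j := by
          apply Finset.sum_le_sum_of_subset_of_nonneg (Finset.subset_univ _)
          intro j _ _; positivity
      _ ≤ ∑ j, (η j)^2 := hmin
      _ = ∑ j ∈ T₁ ∪ T₂, (η j)^2 + ∑ j ∈ (T₁ ∪ T₂)ᶜ, (η j)^2 :=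
          (Finset.sum_add_sum_compl _ _).symm
  have hg1 : ∀ j ∈ T₁, g j = f j ^ 2 - 2 * (f j * η j) + η j ^ 2 := by
    intro j hj
    rw [hT₁, Finset.mem_filter] at hj
    obtain ⟨-, h1, h2⟩ := hj
    have p1 := pos_of_sign_eq_one' h1
    have p2 := pos_of_sign_eq_one' h2
    simp only [hgdef, hy, abs_of_pos p1, abs_of_pos p2, hf j]
    ring
  have hg2 : ∀ j ∈ T₂, g j = f j ^ 2 + 2 * (f j * η j) + η j ^ 2 := by
    intro j hj
    rw [hT₂, Finset.mem_filter] at hj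
    obtain ⟨-, h1, h2⟩ := hj
    have p1 := neg_of_sign_eq_neg_one' h1
    have p2 := neg_of_sign_eq_neg_one' h2
    simp only [hgdef, hy, abs_of_neg p1, abs_of_neg p2, hf j]
    ring
  rw [Finset.sum_union hdisj, Finset.sum_congr rfl hg1, Finset.sum_congr rfl hg2,
    Finset.sum_union hdisj] at key
  simp only [Finset.sum_add_distrib, Finset.sum_sub_distrib, ← Finset.mul_sum] at key
  rw [Finset.sum_union hdisj]
  linarith
end
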